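/- (Lemma 2) Let the total number of chips in a two-color Babylon position be n = 2m. Any position with an odd number of stacks in which exactly one stack X has color x is a first-player win (the player to move wins), provided: the height u of X is less than m; it is not the case that every stack of the other color y has height u/2 (i.e., not every y-stack t satisfies 2·height(t) = u); and at most two y-stacks have height u. -/

import Mathlib

/-
Let `h` be the height of the lone `x`-stack and `H` the multiset of heights of the `y`-stacks.
While no `y`-stack has height `h`, the `x`-stack cannot move, and every move merges two `y`-stacks,
replacing two heights `a, b ∈ H` by `a + b`. Under the hypotheses (`card H` even, `h < ∑ H`, not
all of `H` equal to `h / 2`, at most two entries `h`) the player to move merges two `y`-stacks so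
that no height equals `h` and no single further merge can make all heights `h / 2`. The latter is
guaranteed either by a height above `h / 2`, which survives every merge, or by at most one height
equal to `h / 2`, since heights all equal to `h / 2` with sum above `h` need three stacks. From
there every move restores the hypotheses, and induction on the number of stacks concludes.
-/

/-- A chip color: `true` = red, `false` = blue.  A stack is a nonempty list of
chips, the head of the list being the top chip; the color of a stack is the
color of its top chip.  A position is a finite multiset of stacks. -/
abbrev Stack := List Bool

abbrev Position := Multiset Stack

/-- A legal move replaces two stacks `s` and `t` that have equal length or
equal top color by the single concatenated stack `s ++ t`. -/
def Move (P Q : Position) : Prop :=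
  ∃ s t : Stack, s ≠ [] ∧ t ≠ [] ∧ s ∈ P ∧ t ∈ P.erase s ∧
    (s.length = t.length ∨ s.head? = t.head?) ∧
    Q = (s ++ t) ::ₘ (P.erase s).erase t

/-- Auxiliary predicate, with the number of stacks as fuel: the player to move
wins iff there is a legal move to a position that is not a first-player win. -/
def FirstWinAux : ℕ → Position → Prop
  | 0, _ => False
  | n + 1, P => ∃ Q, Move P Q ∧ ¬ FirstWinAux n Q

/-- The position is a first-player win: the player to move has a winning
strategy.  Since each move decreases the number of stacks by exactly one,
`Multiset.card P` is enough fuel. -/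
def FirstWin (P : Position) : Prop := FirstWinAux (Multiset.card P) P

/-- The initial position with `p` red singleton stacks and `q` blue
singleton stacks. -/
def initPos (p q : ℕ) : Position :=
  Multiset.replicate p [true] + Multiset.replicate q [false]

open Multiset

lemma Multiset.exists_eq_cons_cons_of_two_le_card {α : Type*} {s : Multiset α}
    (hs : 2 ≤ card s) : ∃ a b t, s = a ::ₘ b ::ₘ t := by
  obtain ⟨a, ha⟩ := card_pos_iff_exists_mem.mp (by omega : 0 < card s)
  obtain ⟨s, rfl⟩ := exists_cons_of_mem ha
  obtain ⟨b, hb⟩ := card_pos_iff_exists_mem.mp (by rw [card_cons] at hs; omega : 0 < card s)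
  obtain ⟨t, rfl⟩ := exists_cons_of_mem hb
  exact ⟨a, b, t, rfl⟩

section Heights

variable {h : ℕ} {H H' : Multiset ℕ}

def HeightMerge (H H' : Multiset ℕ) : Prop :=
  ∃ a b T, H = a ::ₘ b ::ₘ T ∧ H' = (a + b) ::ₘ T

lemma HeightMerge.sum_eq (hm : HeightMerge H H') : H'.sum = H.sum := by
  obtain ⟨a, b, T, rfl, rfl⟩ := hm
  simp [add_assoc]

lemma HeightMerge.card_add_one (hm : HeightMerge H H') : card H' + 1 = card H := by
  obtain ⟨a, b, T, rfl, rfl⟩ := hm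
  simp

lemma HeightMerge.exists_le {u : ℕ} (hm : HeightMerge H H') (hu : u ∈ H) : ∃ v ∈ H', u ≤ v := by
  obtain ⟨a, b, T, rfl, rfl⟩ := hm
  rcases mem_cons.mp hu with rfl | hu
  · exact ⟨u + b, mem_cons_self _ _, by omega⟩
  rcases mem_cons.mp hu with rfl | hu
  · exact ⟨a + u, mem_cons_self _ _, by omega⟩
  · exact ⟨u, mem_cons_of_mem hu, le_rfl⟩

lemma two_mul_sum_of_forall_two_mul_eq (hall : ∀ t ∈ H, 2 * t = h) :
    2 * H.sum = card H * h := by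
  induction H using Multiset.induction_on with
  | empty => simp
  | cons a H ih =>
    rw [sum_cons, card_cons, mul_add, hall a (mem_cons_self _ _),
      ih fun t ht => hall t (mem_cons_of_mem ht)]
    ring

-- For a position with one `x`-stack, of height `h`, and `y`-stacks of heights `H`: `NHeights h H`
-- makes it an N-position (the player to move wins), `PHeights h H` a P-position.
def NHeights (h : ℕ) (H : Multiset ℕ) : Prop :=
  Even (card H) ∧ H ≠ 0 ∧ h < H.sum ∧ ¬ (∀ t ∈ H, 2 * t = h) ∧ H.count h ≤ 2

def PHeights (h : ℕ) (H : Multiset ℕ) : Prop :=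
  Odd (card H) ∧ h ∉ H ∧ h < H.sum ∧ ∀ H', HeightMerge H H' → ¬ ∀ t ∈ H', 2 * t = h

lemma PHeights.nHeights_of_heightMerge (hP : PHeights h H) (hm : HeightMerge H H') :
    NHeights h H' := by
  obtain ⟨hodd, hh, hlt, hhalf⟩ := hP
  refine ⟨?_, ?_, hm.sum_eq ▸ hlt, hhalf H' hm, ?_⟩
  · have := hm.card_add_one
    rw [← this, Nat.odd_add_one, Nat.not_odd_iff_even] at hodd
    exact hodd
  · obtain ⟨a, b, T, -, rfl⟩ := hm
    exact cons_ne_zero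
  · obtain ⟨a, b, T, rfl, rfl⟩ := hm
    have hT : h ∉ T := fun hT => hh (mem_cons_of_mem (mem_cons_of_mem hT))
    rw [count_cons, count_eq_zero.mpr hT]
    split_ifs <;> omega

lemma not_forall_two_mul_eq_of_lt_two_mul {u : ℕ} (hm : HeightMerge H H') (hu : u ∈ H)
    (hlt : h < 2 * u) : ¬ ∀ t ∈ H', 2 * t = h := by
  obtain ⟨v, hv, huv⟩ := hm.exists_le hu
  intro hall
  have := hall v hv
  omega

lemma not_forall_two_mul_eq_of_card_filter_le_one (hm : HeightMerge H H') (hlt : h < H.sum)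
    (hhalves : card (H.filter (2 * · = h)) ≤ 1) : ¬ ∀ t ∈ H', 2 * t = h := by
  intro hall
  have hsum := two_mul_sum_of_forall_two_mul_eq hall
  rw [hm.sum_eq] at hsum
  obtain ⟨a, b, T, rfl, rfl⟩ := hm
  have hT : card T ≤ 1 := by
    have hTH : T ≤ a ::ₘ b ::ₘ T := (le_cons_self _ _).trans (le_cons_self _ _)
    have := card_le_card (filter_le_filter (2 * · = h) hTH)
    rw [filter_eq_self.mpr fun t ht => hall t (mem_cons_of_mem ht)] at this
    exact this.trans hhalves
  rw [card_cons] at hsum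
  nlinarith

lemma NHeights.two_le_card (hN : NHeights h H) : 2 ≤ card H := by
  obtain ⟨k, hk⟩ := hN.1
  have := card_pos.mpr hN.2.1
  omega

lemma NHeights.pHeights_add_cons {a b : ℕ} {T : Multiset ℕ} (hN : NHeights h (a ::ₘ b ::ₘ T))
    (hab : a + b ≠ h) (hT : h ∉ T)
    (hsafe : (∃ u ∈ (a + b) ::ₘ T, h < 2 * u) ∨ card (((a + b) ::ₘ T).filter (2 * · = h)) ≤ 1) :
    PHeights h ((a + b) ::ₘ T) := by
  obtain ⟨hev, -, hlt, -, -⟩ := hN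
  have hm : HeightMerge (a ::ₘ b ::ₘ T) ((a + b) ::ₘ T) := ⟨a, b, T, rfl, rfl⟩
  have hlt' : h < ((a + b) ::ₘ T).sum := hm.sum_eq ▸ hlt
  refine ⟨?_, ?_, hlt', fun H' hm' => ?_⟩
  · rw [← hm.card_add_one, Nat.even_add_one, Nat.not_even_iff_odd] at hev
    exact hev
  · rw [mem_cons, not_or]
    exact ⟨Ne.symm hab, hT⟩
  · rcases hsafe with ⟨u, hu, hlt2⟩ | hle
    · exact not_forall_two_mul_eq_of_lt_two_mul hm' hu hlt2
    · exact not_forall_two_mul_eq_of_card_filter_le_one hm' hlt' hle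

lemma NHeights.exists_pHeights_add_cons_of_mem (hN : NHeights h H) (hpos : ∀ t ∈ H, 0 < t)
    (hh : h ∈ H) : ∃ a b T, H = a ::ₘ b ::ₘ T ∧ PHeights h ((a + b) ::ₘ T) := by
  have hcard := hN.two_le_card
  have hcount := hN.2.2.2.2
  have := hpos h hh
  obtain ⟨E, rfl⟩ := exists_cons_of_mem hh
  rw [count_cons_self] at hcount
  by_cases hE : h ∈ E
  · obtain ⟨T, rfl⟩ := exists_cons_of_mem hE
    have hT : h ∉ T := by
      rw [count_cons_self] at hcount
      exact count_eq_zero.mp (by omega)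
    exact ⟨h, h, T, rfl, hN.pHeights_add_cons (by omega) hT
      (Or.inl ⟨h + h, mem_cons_self _ _, by omega⟩)⟩
  · obtain ⟨b, hb⟩ := card_pos_iff_exists_mem.mp (by rw [card_cons] at hcard; omega : 0 < card E)
    obtain ⟨T, rfl⟩ := exists_cons_of_mem hb
    have := hpos b (by simp)
    exact ⟨h, b, T, rfl, hN.pHeights_add_cons (by omega) (fun hT => hE (mem_cons_of_mem hT))
      (Or.inl ⟨h + b, mem_cons_self _ _, by omega⟩)⟩

lemma exists_eq_cons_cons_add_ne (hcard : 2 ≤ card H) (hlt : h < H.sum)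
    (hhalf : ∀ t ∈ H, 2 * t ≠ h) : ∃ a b T, H = a ::ₘ b ::ₘ T ∧ a + b ≠ h := by
  obtain ⟨a, b, T, rfl⟩ := exists_eq_cons_cons_of_two_le_card hcard
  by_cases hab : a + b = h
  swap
  · exact ⟨a, b, T, rfl, hab⟩
  obtain ⟨c, hc⟩ : ∃ c, c ∈ T := by
    refine card_pos_iff_exists_mem.mp (card_pos.mpr ?_)
    rintro rfl
    simp at hlt
    omega
  obtain ⟨T, rfl⟩ := exists_cons_of_mem hc
  by_cases hac : a + c = h
  · refine ⟨b, c, a ::ₘ T, by rw [cons_swap a b, cons_swap a c], ?_⟩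
    have := hhalf b (by simp)
    omega
  · exact ⟨a, c, b ::ₘ T, by rw [cons_swap b c], hac⟩

lemma NHeights.exists_pHeights_add_cons_of_not_mem (hN : NHeights h H)
    (hpos : ∀ t ∈ H, 0 < t) (hh : h ∉ H) :
    ∃ a b T, H = a ::ₘ b ::ₘ T ∧ PHeights h ((a + b) ::ₘ T) := by
  have hT {a b : ℕ} {T : Multiset ℕ} (hH : H = a ::ₘ b ::ₘ T) : h ∉ T :=
    fun hT => hh (hH ▸ mem_cons_of_mem (mem_cons_of_mem hT))
  by_cases hhalf : ∃ a ∈ H, 2 * a = h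
  · obtain ⟨a, ha, ha2⟩ := hhalf
    obtain ⟨e, he, he2⟩ := not_forall₂.mp hN.2.2.2.1
    have := hpos e he
    obtain ⟨E, rfl⟩ := exists_cons_of_mem ha
    have heE : e ∈ E := (mem_cons.mp he).resolve_left (by rintro rfl; exact he2 ha2)
    obtain ⟨T, rfl⟩ := exists_cons_of_mem heE
    exact ⟨a, e, T, rfl, hN.pHeights_add_cons (by omega) (hT rfl)
      (Or.inl ⟨a + e, mem_cons_self _ _, by omega⟩)⟩
  · -- Any merge avoiding height `h` works: afterwards only the merged stack can have height `h / 2`.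
    push Not at hhalf
    obtain ⟨a, b, T, rfl, hab⟩ := exists_eq_cons_cons_add_ne hN.two_le_card hN.2.2.1 hhalf
    refine ⟨a, b, T, rfl, hN.pHeights_add_cons hab (hT rfl) (Or.inr ?_)⟩
    rw [filter_cons, filter_eq_nil.mpr fun t ht => hhalf t (by simp [ht])]
    split_ifs <;> simp

lemma NHeights.exists_heightMerge_pHeights (hN : NHeights h H) (hpos : ∀ t ∈ H, 0 < t) :
    ∃ H', HeightMerge H H' ∧ PHeights h H' := by
  obtain ⟨a, b, T, rfl, hP⟩ := if hh : h ∈ H then hN.exists_pHeights_add_cons_of_mem hpos hh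
    else hN.exists_pHeights_add_cons_of_not_mem hpos hh
  exact ⟨_, ⟨a, b, T, rfl, rfl⟩, hP⟩

end Heights

section Game

lemma Move.exists_eq_cons_cons {P Q : Position} (hm : Move P Q) :
    ∃ s t R, P = s ::ₘ t ::ₘ R ∧ Q = (s ++ t) ::ₘ R ∧
      (s.length = t.length ∨ s.head? = t.head?) := by
  obtain ⟨s, t, -, -, hs, ht, hst, rfl⟩ := hm
  exact ⟨s, t, _, by rw [cons_erase ht, cons_erase hs], rfl, hst⟩

lemma Move.card_add_one {P Q : Position} (hm : Move P Q) : card Q + 1 = card P := by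
  obtain ⟨s, t, R, rfl, rfl, -⟩ := hm.exists_eq_cons_cons
  simp

lemma move_cons_cons {s t : Stack} (R : Position) (hs : s ≠ []) (ht : t ≠ [])
    (hst : s.length = t.length ∨ s.head? = t.head?) :
    Move (s ::ₘ t ::ₘ R) ((s ++ t) ::ₘ R) :=
  ⟨s, t, hs, ht, mem_cons_self _ _, by simp, hst, by simp⟩

lemma firstWin_iff {P : Position} : FirstWin P ↔ ∃ Q, Move P Q ∧ ¬ FirstWin Q := by
  unfold FirstWin
  rcases hP : card P with _ | n
  · simp only [FirstWinAux, false_iff, not_exists, not_and]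
    intro Q hm
    have := hm.card_add_one
    omega
  · refine exists_congr fun Q => and_congr_right fun hm => ?_
    have := hm.card_add_one
    rw [show card Q = n by omega]

lemma Move.exists_tail_merge {X : Stack} {Y Q : Position}
    (hX : ∀ t ∈ Y, ¬ (X.length = t.length ∨ X.head? = t.head?)) (hm : Move (X ::ₘ Y) Q) :
    ∃ s t R, Y = s ::ₘ t ::ₘ R ∧ Q = X ::ₘ (s ++ t) ::ₘ R := by
  obtain ⟨s, t, R, hP, rfl, hst⟩ := hm.exists_eq_cons_cons
  rcases cons_eq_cons.mp hP with ⟨rfl, rfl⟩ | ⟨-, Y', rfl, htR⟩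
  · exact absurd hst (hX t (mem_cons_self _ _))
  rcases cons_eq_cons.mp htR.symm with ⟨rfl, rfl⟩ | ⟨-, R', rfl, rfl⟩
  · exact absurd (hst.imp Eq.symm Eq.symm) (hX s (mem_cons_self _ _))
  · exact ⟨s, t, R', rfl, cons_swap _ _ _⟩

lemma exists_eq_cons_cons_of_heightMerge_map_length {α : Type*} {Y : Multiset (List α)}
    {H' : Multiset ℕ} (hm : HeightMerge (Y.map List.length) H') :
    ∃ s t R, Y = s ::ₘ t ::ₘ R ∧ H' = ((s ++ t) ::ₘ R).map List.length := by
  classical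
  obtain ⟨a, b, T, hY, rfl⟩ := hm
  obtain ⟨s, hs, rfl, hYs⟩ := (map_eq_cons _ _ _ _).mpr hY
  obtain ⟨t, ht, rfl, rfl⟩ := (map_eq_cons _ _ _ _).mpr hYs
  refine ⟨s, t, (Y.erase s).erase t, ?_, by simp⟩
  rw [cons_erase ht, cons_erase hs]

lemma forall_head?_cons_append {c : Bool} {s t : Stack} {R : Position}
    (h : ∀ u ∈ s ::ₘ t ::ₘ R, u.head? = some c) : ∀ u ∈ (s ++ t) ::ₘ R, u.head? = some c := by
  intro u hu
  rcases mem_cons.mp hu with rfl | hu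
  · simp [List.head?_append, h s (mem_cons_self _ _)]
  · exact h u (by simp [hu])

variable {x : Bool} {X : Stack}

lemma forall_head?_eq_not_of_card_filter_eq_one {Y : Position} (hne : ∀ t ∈ Y, t ≠ [])
    (hX : X.head? = some x) (hone : card ((X ::ₘ Y).filter (·.head? = some x)) = 1) :
    ∀ t ∈ Y, t.head? = some (!x) := by
  rw [filter_cons, if_pos hX, card_add, card_singleton, add_eq_left, card_eq_zero,
    filter_eq_nil] at hone
  intro t ht
  obtain ⟨c, l, rfl⟩ := List.exists_cons_of_ne_nil (hne t ht)
  have := hone _ ht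
  cases c <;> cases x <;> simp_all

mutual

theorem firstWin_of_nHeights {Y : Position} (hX : X.head? = some x)
    (hY : ∀ t ∈ Y, t.head? = some (!x)) (hN : NHeights X.length (Y.map List.length)) :
    FirstWin (X ::ₘ Y) := by
  have hpos : ∀ n ∈ Y.map List.length, 0 < n := by
    intro n hn
    obtain ⟨t, ht, rfl⟩ := mem_map.mp hn
    exact List.length_pos_of_mem (List.mem_of_mem_head? (hY t ht))
  obtain ⟨H', hm, hP⟩ := hN.exists_heightMerge_pHeights hpos
  obtain ⟨s, t, R, rfl, rfl⟩ := exists_eq_cons_cons_of_heightMerge_map_length hm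
  have hs := hY s (by simp)
  have ht := hY t (by simp)
  refine firstWin_iff.mpr ⟨X ::ₘ (s ++ t) ::ₘ R, ?_,
    not_firstWin_of_pHeights hX (forall_head?_cons_append hY) hP⟩
  rw [cons_swap X s, cons_swap X t, cons_swap X (s ++ t)]
  exact move_cons_cons _ (List.ne_nil_of_mem (List.mem_of_mem_head? hs))
    (List.ne_nil_of_mem (List.mem_of_mem_head? ht)) (Or.inr (hs.trans ht.symm))
termination_by card Y
decreasing_by subst_vars; simp

theorem not_firstWin_of_pHeights {Y : Position} (hX : X.head? = some x)
    (hY : ∀ t ∈ Y, t.head? = some (!x)) (hP : PHeights X.length (Y.map List.length)) :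
    ¬ FirstWin (X ::ₘ Y) := by
  intro hW
  obtain ⟨Q, hm, hQ⟩ := firstWin_iff.mp hW
  have hXY : ∀ t ∈ Y, ¬ (X.length = t.length ∨ X.head? = t.head?) := by
    rintro t ht (hl | hc)
    · exact hP.2.1 (hl ▸ mem_map_of_mem _ ht)
    · rw [hX, hY t ht] at hc
      cases x <;> simp at hc
  obtain ⟨s, t, R, rfl, rfl⟩ := hm.exists_tail_merge hXY
  exact hQ (firstWin_of_nHeights hX (forall_head?_cons_append hY)
    (hP.nHeights_of_heightMerge ⟨s.length, t.length, R.map List.length, by simp, by simp⟩))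
termination_by card Y
decreasing_by subst_vars; simp

end

end Game

/-- Lemma 2: if the total number of chips is `2 * m`, the number of stacks is
odd, exactly one stack `X` has color `x`, the height `u` of `X` is less than
`m`, not every stack of the other color has height `u / 2`, and at most two
stacks of the other color have height `u`, then the position is a
first-player win. -/
theorem lemma2 (m u : ℕ) (P : Position) (x : Bool) (X : Stack)
    (hne : ∀ s ∈ P, s ≠ [])
    (hchips : (P.map List.length).sum = 2 * m)
    (hodd : Odd (Multiset.card P))
    (hX : X ∈ P) (hXcol : X.head? = some x)
    (hone : Multiset.card (P.filter (fun s => s.head? = some x)) = 1)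
    (hu : X.length = u) (hum : u < m)
    (hhalf : ¬ ∀ t ∈ P, t.head? = some (!x) → 2 * t.length = u)
    (htwo : Multiset.card
      (P.filter (fun t => t.head? = some (!x) ∧ t.length = u)) ≤ 2) :
    FirstWin P := by
  obtain ⟨Y, rfl⟩ := exists_cons_of_mem hX
  subst hu
  have hXy : X.head? ≠ some (!x) := by rw [hXcol]; cases x <;> simp
  have hY := forall_head?_eq_not_of_card_filter_eq_one
    (fun t ht => hne t (mem_cons_of_mem ht)) hXcol hone
  refine firstWin_of_nHeights hXcol hY ⟨?_, ?_, ?_, ?_, ?_⟩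
  · rwa [card_map, ← Nat.not_odd_iff_even, ← Nat.odd_add_one, ← card_cons X]
  · intro h0
    apply hhalf
    simp_all
  · simp only [map_cons, sum_cons] at hchips
    omega
  · intro hall
    apply hhalf
    intro t ht hty
    rcases mem_cons.mp ht with rfl | ht
    · exact absurd hty hXy
    · exact hall t.length (mem_map_of_mem _ ht)
  · rw [filter_cons, if_neg fun h => hXy h.1, zero_add] at htwo
    rw [count_map]
    convert htwo using 2
    exact filter_congr fun t ht => by simp [hY t ht, eq_comm]
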